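/- arXiv:2412.04016 — 6 statements merged into one kernel-verified Lean document; each statement's English description precedes it below -/
import Mathlib

section
/- Let G = (V, E) be a finite simple graph and let k be a natural number. There exist two disjoint independent sets A, B ⊆ V with |A| + |B| ≥ k (equivalently, an induced bipartite subgraph of G with at least k vertices) if and only if there exist two assignments α₁, α₂ : V → Bool such that for every edge {u, v} ∈ E and each i ∈ {1, 2} at least one of α_i(u) = true or α_i(v) = true holds, and |{v ∈ V : α₁(v) ≠ α₂(v)}| ≥ k. -/
/-!
An assignment satisfies the monotone formula exactly when its set of false variables is
independent, and the Hamming distance of two assignments is the size of the symmetric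
difference of their false sets. Disjoint independent sets `A`, `B` are the false sets of two
satisfying assignments at distance `|A ∆ B| = |A| + |B|`; conversely the false sets `F₁`, `F₂`
of two satisfying assignments yield the disjoint independent sets `F₁ \ F₂` and `F₂ \ F₁`,
whose sizes add up to `|F₁ ∆ F₂|`.
-/

open Finset
open scoped symmDiff

lemma Finset.card_symmDiff {α : Type*} [DecidableEq α] (s t : Finset α) :
    #(s ∆ t) = #(s \ t) + #(t \ s) := by
  rw [symmDiff_def, sup_eq_union, card_union_of_disjoint disjoint_sdiff_sdiff]

section

variable {V : Type*} [Fintype V]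

def falseSet (α : V → Bool) : Finset V := univ.filter (α · = false)

@[simp]
lemma mem_falseSet {α : V → Bool} {v : V} : v ∈ falseSet α ↔ α v = false := by
  simp [falseSet]

lemma falseSet_decide_not_mem [DecidableEq V] (A : Finset V) :
    falseSet (fun v => decide (v ∉ A)) = A := by
  ext v
  simp

lemma filter_ne_eq_falseSet_symmDiff [DecidableEq V] (α₁ α₂ : V → Bool) :
    univ.filter (fun v => α₁ v ≠ α₂ v) = falseSet α₁ ∆ falseSet α₂ := by
  ext v
  simp only [mem_filter, mem_univ, true_and, mem_symmDiff, mem_falseSet]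
  cases α₁ v <;> cases α₂ v <;> decide

lemma SimpleGraph.forall_adj_or_iff_falseSet (G : SimpleGraph V) (α : V → Bool) :
    (∀ u v : V, G.Adj u v → (α u = true ∨ α v = true)) ↔
      ∀ u ∈ falseSet α, ∀ v ∈ falseSet α, ¬ G.Adj u v := by
  simp only [mem_falseSet]
  refine ⟨fun h u hu v hv huv => ?_, fun h u v huv => ?_⟩
  · simpa [hu, hv] using h u v huv
  · cases hu : α u <;> cases hv : α v <;> simp_all

end

/-- Induced bipartite subgraph of size ≥ k ↔ two satisfying assignments of the
monotone 2CNF formula φ̄_G (clauses x_u ∨ x_v over edges) at Hamming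
distance ≥ k. -/
theorem induced_bipartite_iff_monotone_diverse_pair
    {V : Type*} [Fintype V] (G : SimpleGraph V) (k : ℕ) :
    (∃ A B : Finset V, Disjoint A B ∧
      (∀ u ∈ A, ∀ v ∈ A, ¬ G.Adj u v) ∧
      (∀ u ∈ B, ∀ v ∈ B, ¬ G.Adj u v) ∧
      k ≤ A.card + B.card) ↔
    (∃ α₁ α₂ : V → Bool,
      (∀ u v : V, G.Adj u v → (α₁ u = true ∨ α₁ v = true)) ∧
      (∀ u v : V, G.Adj u v → (α₂ u = true ∨ α₂ v = true)) ∧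
      k ≤ (Finset.univ.filter fun v => α₁ v ≠ α₂ v).card) := by
  classical
  simp only [G.forall_adj_or_iff_falseSet, filter_ne_eq_falseSet_symmDiff]
  constructor
  · rintro ⟨A, B, hAB, hA, hB, hk⟩
    refine ⟨fun v => decide (v ∉ A), fun v => decide (v ∉ B), ?_⟩
    simp only [falseSet_decide_not_mem]
    refine ⟨hA, hB, ?_⟩
    rwa [symmDiff_eq_union hAB, card_union_of_disjoint hAB]
  · rintro ⟨α₁, α₂, h₁, h₂, hk⟩
    refine ⟨falseSet α₁ \ falseSet α₂, falseSet α₂ \ falseSet α₁, disjoint_sdiff_sdiff,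
      fun u hu v hv => h₁ u (sdiff_subset hu) v (sdiff_subset hv),
      fun u hu v hv => h₂ u (sdiff_subset hu) v (sdiff_subset hv), ?_⟩
    rwa [← card_symmDiff]
end

section
/- Let φ be a 2CNF formula over variables x₁, …, x_n and let s be a natural number. There exist two satisfying assignments α₁, α₂ of φ with |{i : α₁(x_i) ≠ α₂(x_i)}| ≥ n − s if and only if there exists a set T of at most s asynchronous clauses of φ* (i.e., T ⊆ S with |T| ≤ s) such that the formula obtained from φ* by removing the clauses in T is satisfiable. -/
/-- An assignment satisfies a literal `(v, b)` iff it assigns `b` to `v`. -/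
def SatLit {V : Type*} (α : V → Bool) (l : V × Bool) : Prop :=
  α l.1 = l.2

/-- An assignment satisfies a clause (a finite set of literals) iff it
satisfies at least one of its literals. -/
def SatClause {V : Type*} (α : V → Bool) (C : Finset (V × Bool)) : Prop :=
  ∃ l ∈ C, SatLit α l

/-- An assignment satisfies a CNF formula (a finite set of clauses) iff it
satisfies every clause. -/
def SatCNF {V : Type*} (α : V → Bool) (φ : Finset (Finset (V × Bool))) : Prop :=
  ∀ C ∈ φ, SatClause α C

/-- The copy of a clause over `X = Fin n` on the `X`-side of `X ∪ Y`. -/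
def liftX {n : ℕ} (C : Finset (Fin n × Bool)) : Finset ((Fin n ⊕ Fin n) × Bool) :=
  C.image fun l => (Sum.inl l.1, l.2)

/-- The copy of a clause over `X = Fin n` on the fresh `Y`-side of `X ∪ Y`. -/
def liftY {n : ℕ} (C : Finset (Fin n × Bool)) : Finset ((Fin n ⊕ Fin n) × Bool) :=
  C.image fun l => (Sum.inr l.1, l.2)

/-- The set `S` of asynchronous clauses: `(x_i ∨ y_i)` and `(¬x_i ∨ ¬y_i)`
for each `1 ≤ i ≤ n`. -/
def asyncClauses (n : ℕ) : Finset (Finset ((Fin n ⊕ Fin n) × Bool)) :=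
  ((Finset.univ : Finset (Fin n)).image fun i =>
      ({(Sum.inl i, true), (Sum.inr i, true)} : Finset ((Fin n ⊕ Fin n) × Bool))) ∪
  ((Finset.univ : Finset (Fin n)).image fun i =>
      ({(Sum.inl i, false), (Sum.inr i, false)} : Finset ((Fin n ⊕ Fin n) × Bool)))

/-- The formula `φ* = φ ∧ φ' ∧ ⋀ᵢ (xᵢ ∨ yᵢ) ∧ (¬xᵢ ∨ ¬yᵢ)`. -/
def phiStar {n : ℕ} (φ : Finset (Finset (Fin n × Bool))) :
    Finset (Finset ((Fin n ⊕ Fin n) × Bool)) :=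
  φ.image liftX ∪ φ.image liftY ∪ asyncClauses n

/-! A satisfying assignment `β` of `φ* \ T` is a pair `(β ∘ inl, β ∘ inr)` of models of `φ`; the
only asynchronous clauses it falsifies are, for each index `i` on which the two models agree
with common value `b`, the clause `(xᵢ = ¬b) ∨ (yᵢ = ¬b)`, and these must all lie in `T`. So
deleting `s` asynchronous clauses suffices exactly when the models agree on at most `s`
indices. -/

section Clauses

variable {U V : Type*}

theorem satClause_image_iff [DecidableEq V] (f : U → V) (β : V → Bool)
    (C : Finset (U × Bool)) :
    SatClause β (C.image fun l => (f l.1, l.2)) ↔ SatClause (β ∘ f) C := by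
  simp only [SatClause, SatLit, Finset.mem_image]
  constructor
  · rintro ⟨_, ⟨l, hl, rfl⟩, h⟩
    exact ⟨l, hl, h⟩
  · rintro ⟨l, hl, h⟩
    exact ⟨_, ⟨l, hl, rfl⟩, h⟩

theorem satClause_liftX_iff {n : ℕ} (β : Fin n ⊕ Fin n → Bool) (C : Finset (Fin n × Bool)) :
    SatClause β (liftX C) ↔ SatClause (β ∘ Sum.inl) C :=
  satClause_image_iff _ β C

theorem satClause_liftY_iff {n : ℕ} (β : Fin n ⊕ Fin n → Bool) (C : Finset (Fin n × Bool)) :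
    SatClause β (liftY C) ↔ SatClause (β ∘ Sum.inr) C :=
  satClause_image_iff _ β C

end Clauses

section Async

variable {X : Type*} [DecidableEq X]

def asyncClause (i : X) (b : Bool) : Finset ((X ⊕ X) × Bool) :=
  {(Sum.inl i, b), (Sum.inr i, b)}

theorem satClause_asyncClause_iff (β : X ⊕ X → Bool) (i : X) (b : Bool) :
    SatClause β (asyncClause i b) ↔ β (Sum.inl i) = b ∨ β (Sum.inr i) = b := by
  simp [SatClause, SatLit, asyncClause]

theorem asyncClause_inj {i j : X} {b c : Bool} :
    asyncClause i b = asyncClause j c ↔ i = j ∧ b = c := by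
  refine ⟨fun h => ?_, by rintro ⟨rfl, rfl⟩; rfl⟩
  have hi : (Sum.inl i, b) ∈ asyncClause j c := h ▸ by simp [asyncClause]
  simpa [asyncClause] using hi

end Async

theorem mem_asyncClauses {n : ℕ} {C : Finset ((Fin n ⊕ Fin n) × Bool)} :
    C ∈ asyncClauses n ↔ ∃ i b, C = asyncClause i b := by
  simp only [asyncClauses, Finset.mem_union, Finset.mem_image, Finset.mem_univ, true_and]
  constructor
  · rintro (⟨i, rfl⟩ | ⟨i, rfl⟩)
    exacts [⟨i, true, rfl⟩, ⟨i, false, rfl⟩]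
  · rintro ⟨i, (_ | _), rfl⟩
    exacts [Or.inr ⟨i, rfl⟩, Or.inl ⟨i, rfl⟩]

theorem liftX_notMem_asyncClauses {n : ℕ} (C : Finset (Fin n × Bool)) :
    liftX C ∉ asyncClauses n := by
  rintro hC
  obtain ⟨i, b, hC⟩ := mem_asyncClauses.mp hC
  have hi : (Sum.inr i, b) ∈ liftX C := hC ▸ by simp [asyncClause]
  simp [liftX] at hi

theorem liftY_notMem_asyncClauses {n : ℕ} (C : Finset (Fin n × Bool)) :
    liftY C ∉ asyncClauses n := by
  rintro hC
  obtain ⟨i, b, hC⟩ := mem_asyncClauses.mp hC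
  have hi : (Sum.inl i, b) ∈ liftY C := hC ▸ by simp [asyncClause]
  simp [liftY] at hi

section Falsified

variable {n : ℕ}

def agreementSet (β : Fin n ⊕ Fin n → Bool) : Finset (Fin n) :=
  Finset.univ.filter fun i => β (Sum.inl i) = β (Sum.inr i)

def falsifiedAsync (β : Fin n ⊕ Fin n → Bool) : Finset (Finset ((Fin n ⊕ Fin n) × Bool)) :=
  (agreementSet β).image fun i => asyncClause i (!β (Sum.inl i))

theorem falsifiedAsync_subset_asyncClauses (β : Fin n ⊕ Fin n → Bool) :
    falsifiedAsync β ⊆ asyncClauses n := by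
  intro C hC
  obtain ⟨i, -, rfl⟩ := Finset.mem_image.mp hC
  exact mem_asyncClauses.mpr ⟨i, _, rfl⟩

theorem card_falsifiedAsync (β : Fin n ⊕ Fin n → Bool) :
    (falsifiedAsync β).card = (agreementSet β).card :=
  Finset.card_image_of_injOn fun _ _ _ _ h => (asyncClause_inj.mp h).1

theorem asyncClause_mem_falsifiedAsync_iff (β : Fin n ⊕ Fin n → Bool) (i : Fin n) (b : Bool) :
    asyncClause i b ∈ falsifiedAsync β ↔ ¬SatClause β (asyncClause i b) := by
  simp only [falsifiedAsync, agreementSet, Finset.mem_image, Finset.mem_filter, Finset.mem_univ,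
    true_and, asyncClause_inj, satClause_asyncClause_iff]
  constructor
  · rintro ⟨j, hagree, rfl, rfl⟩
    cases h : β (Sum.inl j) <;> simp_all
  · intro h
    refine ⟨i, ?_, rfl, ?_⟩ <;> cases b <;> simp_all

theorem satCNF_phiStar_sdiff_iff (φ : Finset (Finset (Fin n × Bool)))
    {T : Finset (Finset ((Fin n ⊕ Fin n) × Bool))} (hT : T ⊆ asyncClauses n)
    (β : Fin n ⊕ Fin n → Bool) :
    SatCNF β (phiStar φ \ T) ↔
      SatCNF (β ∘ Sum.inl) φ ∧ SatCNF (β ∘ Sum.inr) φ ∧ falsifiedAsync β ⊆ T := by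
  have liftX_mem D (hD : D ∈ φ) : liftX D ∈ phiStar φ \ T :=
    Finset.mem_sdiff.mpr
      ⟨Finset.mem_union_left _ (Finset.mem_union_left _ (Finset.mem_image_of_mem _ hD)),
        fun hDT => liftX_notMem_asyncClauses D (hT hDT)⟩
  have liftY_mem D (hD : D ∈ φ) : liftY D ∈ phiStar φ \ T :=
    Finset.mem_sdiff.mpr
      ⟨Finset.mem_union_left _ (Finset.mem_union_right _ (Finset.mem_image_of_mem _ hD)),
        fun hDT => liftY_notMem_asyncClauses D (hT hDT)⟩
  constructor
  · intro hβ
    refine ⟨fun D hD => (satClause_liftX_iff β D).mp (hβ _ (liftX_mem D hD)),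
      fun D hD => (satClause_liftY_iff β D).mp (hβ _ (liftY_mem D hD)), fun C hC => ?_⟩
    obtain ⟨i, b, rfl⟩ := mem_asyncClauses.mp (falsifiedAsync_subset_asyncClauses β hC)
    by_contra hCT
    refine (asyncClause_mem_falsifiedAsync_iff β i b).mp hC (hβ _ ?_)
    exact Finset.mem_sdiff.mpr ⟨Finset.mem_union_right _ (mem_asyncClauses.mpr ⟨i, b, rfl⟩), hCT⟩
  · rintro ⟨h₁, h₂, hfalse⟩ C hC
    obtain ⟨hC, hCT⟩ := Finset.mem_sdiff.mp hC
    simp only [phiStar, Finset.mem_union, Finset.mem_image] at hC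
    rcases hC with (⟨D, hD, rfl⟩ | ⟨D, hD, rfl⟩) | hC
    · exact (satClause_liftX_iff β D).mpr (h₁ D hD)
    · exact (satClause_liftY_iff β D).mpr (h₂ D hD)
    · obtain ⟨i, b, rfl⟩ := mem_asyncClauses.mp hC
      by_contra hC
      exact hCT (hfalse ((asyncClause_mem_falsifiedAsync_iff β i b).mpr hC))

theorem card_agreementSet_add (β : Fin n ⊕ Fin n → Bool) :
    (agreementSet β).card + (Finset.univ.filter fun i => β (Sum.inl i) ≠ β (Sum.inr i)).card
      = n := by
  simpa [agreementSet] using Finset.card_filter_add_card_filter_not (s := Finset.univ)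
    (p := fun i : Fin n => β (Sum.inl i) = β (Sum.inr i))

end Falsified

theorem dissimilar_pair_iff_async_deletion_general
    (n : ℕ) (φ : Finset (Finset (Fin n × Bool)))
    (s : ℕ) :
    (∃ α₁ α₂ : Fin n → Bool, SatCNF α₁ φ ∧ SatCNF α₂ φ ∧
      n - s ≤ (Finset.univ.filter fun i => α₁ i ≠ α₂ i).card) ↔
    (∃ T : Finset (Finset ((Fin n ⊕ Fin n) × Bool)),
      T ⊆ asyncClauses n ∧ T.card ≤ s ∧
      ∃ β : (Fin n ⊕ Fin n) → Bool, SatCNF β (phiStar φ \ T)) := by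
  constructor
  · rintro ⟨α₁, α₂, h₁, h₂, hdist⟩
    let β : Fin n ⊕ Fin n → Bool := Sum.elim α₁ α₂
    have hcard : (agreementSet β).card + (Finset.univ.filter fun i => α₁ i ≠ α₂ i).card = n :=
      card_agreementSet_add β
    refine ⟨falsifiedAsync β, falsifiedAsync_subset_asyncClauses β, ?_, β,
      (satCNF_phiStar_sdiff_iff φ (falsifiedAsync_subset_asyncClauses β) β).mpr
        ⟨h₁, h₂, subset_rfl⟩⟩
    rw [card_falsifiedAsync]
    omega
  · rintro ⟨T, hT, hTs, β, hβ⟩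
    obtain ⟨h₁, h₂, hfalse⟩ := (satCNF_phiStar_sdiff_iff φ hT β).mp hβ
    have hcard : (agreementSet β).card +
        (Finset.univ.filter fun i => (β ∘ Sum.inl) i ≠ (β ∘ Sum.inr) i).card = n :=
      card_agreementSet_add β
    have hagree := card_falsifiedAsync β ▸ Finset.card_le_card hfalse
    exact ⟨_, _, h₁, h₂, by omega⟩

/-- Lemma 3: a pair of satisfying assignments of a 2CNF formula `φ` at Hamming
distance ≥ n - s exists iff deleting at most `s` asynchronous clauses from `φ*`
makes it satisfiable. -/
theorem dissimilar_pair_iff_async_deletion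
    (n : ℕ) (φ : Finset (Finset (Fin n × Bool)))
    (h2 : ∀ C ∈ φ, C.card ≤ 2) (s : ℕ) :
    (∃ α₁ α₂ : Fin n → Bool, SatCNF α₁ φ ∧ SatCNF α₂ φ ∧
      n - s ≤ (Finset.univ.filter fun i => α₁ i ≠ α₂ i).card) ↔
    (∃ T : Finset (Finset ((Fin n ⊕ Fin n) × Bool)),
      T ⊆ asyncClauses n ∧ T.card ≤ s ∧
      ∃ β : (Fin n ⊕ Fin n) → Bool, SatCNF β (phiStar φ \ T)) :=
  dissimilar_pair_iff_async_deletion_general n φ s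
end

section
/- Let φ be a 2CNF formula in which every clause consists of exactly two literals, let S be a subset of the clauses of φ, let s be a natural number, and let G_I and N be the graph and the number defined from (φ, S, s) as in the context. There exists a set T ⊆ S with |T| ≤ s such that the formula obtained from φ by removing the clauses in T is satisfiable if and only if G_I has a vertex cover of size at most N + s. -/
/-- The literal in slot `d` (the `d`-side) of clause `c` of `φ`.
A 2CNF formula `φ` is modelled as a list of clauses, each clause being a pair
of (not necessarily distinct) literals, a literal being a pair
(variable, polarity). -/
def litAt {X : Type*} (φ : List ((X × Bool) × (X × Bool)))
    (c : Fin φ.length) (d : Bool) : X × Bool :=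
  if d then (φ.get c).2 else (φ.get c).1

/-- Vertices of the graph `G_I`: a vertex `(p, c, d, j)` stands for
`v^j_{ℓ, i}` where `i` is the occurrence of variable `var(litAt φ c d)` sitting
in slot `(c, d)`, and `ℓ` is that variable with polarity `p`.
(Occurrences of a variable `x` are in canonical bijection with the slots
containing `x`, so each literal `ℓ` over `x` gets `n_x · (s+1)` vertices.) -/
abbrev GIVert {X : Type*} (φ : List ((X × Bool) × (X × Bool))) (s : ℕ) :=
  Bool × Fin φ.length × Bool × Fin (s + 1)

/-- The edge relation of the graph `G_I` built from `(φ, S, s)`: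
variable edges, hard-clause edges (for clauses not in `S`, one per level `j`),
and soft-clause edges (for clauses in `S`, only at level `j = 0`). -/
def GIRel {X : Type*} (φ : List ((X × Bool) × (X × Bool)))
    (S : Finset (Fin φ.length)) (s : ℕ)
    (a b : GIVert φ s) : Prop :=
  -- variable edge: `a ∈ V(x)`, `b ∈ V(¬x)` for a common variable `x`
  ((litAt φ a.2.1 a.2.2.1).1 = (litAt φ b.2.1 b.2.2.1).1 ∧ a.1 ≠ b.1) ∨
  -- hard-clause edge: both endpoints carry the literals of the same clause
  -- `c ∉ S`, at an arbitrary common level `j`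
  (a.2.1 = b.2.1 ∧ a.2.2.1 ≠ b.2.2.1 ∧ a.2.2.2 = b.2.2.2 ∧
    a.1 = (litAt φ a.2.1 a.2.2.1).2 ∧ b.1 = (litAt φ b.2.1 b.2.2.1).2 ∧
    a.2.1 ∉ S) ∨
  -- soft-clause edge: as above but `c ∈ S` and only at level `j = 0`
  (a.2.1 = b.2.1 ∧ a.2.2.1 ≠ b.2.2.1 ∧ a.2.2.2 = 0 ∧ b.2.2.2 = 0 ∧
    a.1 = (litAt φ a.2.1 a.2.2.1).2 ∧ b.1 = (litAt φ b.2.1 b.2.2.1).2 ∧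
    a.2.1 ∈ S)

/-- The graph `G_I` built from the instance `I = (φ, S, s)`. -/
def GI {X : Type*} (φ : List ((X × Bool) × (X × Bool)))
    (S : Finset (Fin φ.length)) (s : ℕ) : SimpleGraph (GIVert φ s) :=
  SimpleGraph.fromRel (GIRel φ S s)

/-!
The vertices `(true, q)` and `(false, q)` of a slot `q` are joined by a variable edge, so a
vertex cover contains one of them for each of the `N` slots, and contains both for at most `k`
slots when it has `N + k` vertices. Outside these doubled slots the cover picks one polarity per
slot, and the variable edges force the picks to agree on every variable: this is the assignment.
If a clause is falsified by it, each of the clause's edges must be covered at a doubled slot;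
a hard clause has `s + 1` such edges, which is too many, and a soft clause has one at level `0`,
so at most `s` soft clauses are falsified. Conversely, the vertices whose polarity agrees with a
satisfying assignment, together with one level-`0` vertex per deleted clause, form a cover.
-/

open Finset

theorem card_add_card_filter_forall_mem_le {P : Type*} [Fintype P] [DecidableEq P]
    (C : Finset (Bool × P)) (hC : ∀ q, ∃ p, (p, q) ∈ C) :
    Fintype.card P + #{q | ∀ p, (p, q) ∈ C} ≤ #C := by
  set A : Bool → Finset P := fun p => {q | (p, q) ∈ C}
  have hunion : A true ∪ A false = univ := by
    ext q
    obtain ⟨p, hp⟩ := hC q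
    cases p <;> simp [A, hp]
  have hinter : A true ∩ A false = ({q | ∀ p, (p, q) ∈ C} : Finset P) := by
    ext q
    simp [A, Bool.forall_bool, and_comm]
  have hsum : #(A true) + #(A false) ≤ #C := by
    rw [← card_disjSum]
    refine card_le_card_of_injOn (Sum.elim (Prod.mk true) (Prod.mk false)) ?_ ?_
    · rintro (q | q) hq <;> simpa [A] using hq
    · rintro (q | q) - (q' | q') - h <;> simp_all
  calc Fintype.card P + #{q | ∀ p, (p, q) ∈ C} = #(A true) + #(A false) := by
        rw [← card_union_add_card_inter, hunion, hinter, card_univ]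
    _ ≤ #C := hsum

section Formula

variable {X : Type*} {φ : List ((X × Bool) × (X × Bool))}

def ClauseSat (α : X → Bool) (φ : List ((X × Bool) × (X × Bool))) (c : Fin φ.length) :
    Prop :=
  ∃ d, α (litAt φ c d).1 = (litAt φ c d).2

theorem clauseSat_iff {α : X → Bool} {c : Fin φ.length} :
    ClauseSat α φ c ↔
      α (φ.get c).1.1 = (φ.get c).1.2 ∨ α (φ.get c).2.1 = (φ.get c).2.2 := by
  simp [ClauseSat, litAt]

end Formula

namespace GI

variable {X : Type*} {φ : List ((X × Bool) × (X × Bool))} {S : Finset (Fin φ.length)} {s : ℕ}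

abbrev Slot (φ : List ((X × Bool) × (X × Bool))) (s : ℕ) :=
  Fin φ.length × Bool × Fin (s + 1)

def slotVar (q : Slot φ s) : X := (litAt φ q.1 q.2.1).1

def litVertex (c : Fin φ.length) (d : Bool) (j : Fin (s + 1)) : GIVert φ s :=
  ((litAt φ c d).2, c, d, j)

theorem card_slot : Fintype.card (Slot φ s) = 2 * φ.length * (s + 1) := by
  simp only [Fintype.card_prod, Fintype.card_fin, Fintype.card_bool]
  ring

theorem adj_of_slotVar_eq {p p' : Bool} {q q' : Slot φ s} (hvar : slotVar q = slotVar q')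
    (hp : p ≠ p') : (GI φ S s).Adj (p, q) (p', q') := by
  rw [GI, SimpleGraph.fromRel_adj]
  exact ⟨by simp [hp], Or.inl (Or.inl ⟨hvar, hp⟩)⟩

theorem adj_litVertex {c : Fin φ.length} {j : Fin (s + 1)} (h : c ∉ S ∨ j = 0) :
    (GI φ S s).Adj (litVertex c false j) (litVertex c true j) := by
  rw [GI, SimpleGraph.fromRel_adj]
  refine ⟨by simp [litVertex], Or.inl (Or.inr ?_)⟩
  by_cases hc : c ∈ S
  · exact Or.inr ⟨rfl, Bool.false_ne_true, h.resolve_left (not_not.2 hc),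
      h.resolve_left (not_not.2 hc), rfl, rfl, hc⟩
  · exact Or.inl ⟨rfl, Bool.false_ne_true, rfl, rfl, rfl, hc⟩

theorem rel_cases {a b : GIVert φ s} (h : GIRel φ S s a b) :
    (slotVar a.2 = slotVar b.2 ∧ a.1 ≠ b.1) ∨
      ∃ c j, (c ∉ S ∨ j = 0) ∧ ∀ d, a = litVertex c d j ∨ b = litVertex c d j := by
  obtain ⟨pa, ca, da, ja⟩ := a
  obtain ⟨pb, cb, db, jb⟩ := b
  dsimp only [GIRel] at h
  have hsides : da ≠ db → ∀ d, d = da ∨ d = db := by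
    cases da <;> cases db <;> decide
  rcases h with h | ⟨rfl, hd, rfl, rfl, rfl, hc⟩ | ⟨rfl, hd, rfl, rfl, rfl, rfl, -⟩
  · exact Or.inl h
  · exact Or.inr ⟨ca, ja, Or.inl hc, fun d =>
      (hsides hd d).imp (by rintro rfl; rfl) (by rintro rfl; rfl)⟩
  · exact Or.inr ⟨ca, 0, Or.inr rfl, fun d =>
      (hsides hd d).imp (by rintro rfl; rfl) (by rintro rfl; rfl)⟩

theorem adj_cases {a b : GIVert φ s} (h : (GI φ S s).Adj a b) :
    (slotVar a.2 = slotVar b.2 ∧ a.1 ≠ b.1) ∨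
      ∃ c j, (c ∉ S ∨ j = 0) ∧ ∀ d, a = litVertex c d j ∨ b = litVertex c d j := by
  rw [GI, SimpleGraph.fromRel_adj] at h
  rcases h.2 with h | h
  · exact rel_cases h
  · rcases rel_cases h with ⟨hvar, hp⟩ | ⟨c, j, hcj, hd⟩
    · exact Or.inl ⟨hvar.symm, hp.symm⟩
    · exact Or.inr ⟨c, j, hcj, fun d => (hd d).symm⟩

theorem exists_cover_of_clauseSat {T : Finset (Fin φ.length)} (hTS : T ⊆ S) {α : X → Bool}
    (hα : ∀ c ∉ T, ClauseSat α φ c) :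
    ∃ C : Finset (GIVert φ s), (GI φ S s).IsVertexCover C ∧
      #C ≤ 2 * φ.length * (s + 1) + #T := by
  classical
  let C : Finset (GIVert φ s) :=
    univ.image (fun q => (α (slotVar q), q)) ∪ T.image (fun c => litVertex c false 0)
  have hagree : ∀ v : GIVert φ s, v.1 = α (slotVar v.2) → v ∈ C := fun v hv =>
    mem_union_left _ (mem_image.2 ⟨v.2, mem_univ _, Prod.ext hv.symm rfl⟩)
  refine ⟨C, fun a b hab => ?_, ?_⟩
  · rcases adj_cases hab with ⟨hvar, hp⟩ | ⟨c, j, hcj, hab⟩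
    · have : a.1 = α (slotVar a.2) ∨ b.1 = α (slotVar b.2) := by
        rw [hvar]
        revert hp
        cases a.1 <;> cases b.1 <;> cases α (slotVar b.2) <;> simp
      exact this.imp (hagree a) (hagree b)
    · by_cases hcT : c ∈ T
      · obtain rfl : j = 0 := hcj.resolve_left (not_not.2 (hTS hcT))
        have hmem : litVertex c false 0 ∈ C := mem_union_right _ (mem_image_of_mem _ hcT)
        exact (hab false).imp (fun h : a = _ => h ▸ hmem) (fun h : b = _ => h ▸ hmem)
      · obtain ⟨d, hd⟩ := hα c hcT
        have hmem : litVertex c d j ∈ C := hagree _ hd.symm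
        exact (hab d).imp (fun h : a = _ => h ▸ hmem) (fun h : b = _ => h ▸ hmem)
  · calc #C ≤ #(univ.image fun q => (α (slotVar q), q)) +
          #(T.image fun c => litVertex c false 0) := card_union_le _ _
      _ ≤ Fintype.card (Slot φ s) + #T := add_le_add card_image_le card_image_le
      _ = 2 * φ.length * (s + 1) + #T := by rw [card_slot]

variable {C : Finset (GIVert φ s)}

noncomputable def coverAssignment (C : Finset (GIVert φ s)) (x : X) : Bool :=
  open Classical in decide (∃ q : Slot φ s, slotVar q = x ∧ (false, q) ∉ C)

theorem coverAssignment_slotVar_of_not_mem (hC : (GI φ S s).IsVertexCover C)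
    {p : Bool} {q : Slot φ s} (h : (p, q) ∉ C) : coverAssignment C (slotVar q) = !p := by
  cases p
  · simp only [coverAssignment, Bool.not_false, decide_eq_true_eq]
    exact ⟨q, rfl, h⟩
  · simp only [coverAssignment, Bool.not_true, decide_eq_false_iff_not, not_exists, not_and,
      not_not]
    intro q' hvar
    exact (hC (adj_of_slotVar_eq (p := true) (p' := false) hvar.symm (by simp))).resolve_left h

theorem exists_forall_mem_of_not_clauseSat (hC : (GI φ S s).IsVertexCover C)
    {c : Fin φ.length} {j : Fin (s + 1)} (hcj : c ∉ S ∨ j = 0)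
    (hsat : ¬ ClauseSat (coverAssignment C) φ c) : ∃ d, ∀ p, (p, c, d, j) ∈ C := by
  obtain ⟨d, hd⟩ : ∃ d, litVertex c d j ∈ C :=
    (hC (adj_litVertex hcj)).elim (⟨false, ·⟩) (⟨true, ·⟩)
  have hneg : (!(litAt φ c d).2, c, d, j) ∈ C := by
    by_contra h
    exact hsat ⟨d, (coverAssignment_slotVar_of_not_mem hC h).trans (Bool.not_not _)⟩
  refine ⟨d, fun p => ?_⟩
  rcases Bool.eq_or_eq_not p (litAt φ c d).2 with rfl | rfl
  · exact hd
  · exact hneg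

theorem exists_clauseSat_of_cover (hC : (GI φ S s).IsVertexCover C)
    (hcard : #C ≤ 2 * φ.length * (s + 1) + s) :
    ∃ T ⊆ S, #T ≤ s ∧ ∃ α : X → Bool, ∀ c ∉ T, ClauseSat α φ c := by
  classical
  set α := coverAssignment C
  set D : Finset (Slot φ s) := {q | ∀ p, (p, q) ∈ C}
  have hD : #D ≤ s := by
    have : Fintype.card (Slot φ s) + #D ≤ #C := card_add_card_filter_forall_mem_le C fun q =>
      (hC (adj_of_slotVar_eq (p := true) (p' := false) (q := q) rfl (by simp))).elim
        (⟨true, ·⟩) (⟨false, ·⟩)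
    rw [card_slot] at this
    omega
  have hhard : ∀ c ∉ S, ClauseSat α φ c := by
    intro c hc
    by_contra hsat
    have hlevels : univ ⊆ D.image (·.2.2) := fun j _ => by
      obtain ⟨d, hd⟩ := exists_forall_mem_of_not_clauseSat hC (j := j) (Or.inl hc) hsat
      exact mem_image.2 ⟨(c, d, j), by simpa [D] using hd, rfl⟩
    have := (card_le_card hlevels).trans card_image_le
    rw [card_univ, Fintype.card_fin] at this
    omega
  refine ⟨{c ∈ S | ¬ ClauseSat α φ c}, filter_subset _ _, ?_, α, fun c hc => ?_⟩
  · have hsoft : {c ∈ S | ¬ ClauseSat α φ c} ⊆ D.image (·.1) := fun c hc => by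
      obtain ⟨d, hd⟩ :=
        exists_forall_mem_of_not_clauseSat hC (j := 0) (Or.inr rfl) (mem_filter.1 hc).2
      exact mem_image.2 ⟨(c, d, 0), by simpa [D] using hd, rfl⟩
    exact ((card_le_card hsoft).trans card_image_le).trans hD
  · by_cases hcS : c ∈ S
    · by_contra h
      exact hc (mem_filter.2 ⟨hcS, h⟩)
    · exact hhard c hcS

end GI

/-- Lemma 4 (key equivalence): at most `s` clauses of `S` can be deleted from
`φ` to make it satisfiable iff `G_I` has a vertex cover of size at most
`N + s`, where `N = Σ_x n_x · (s+1) = 2·|φ|·(s+1)`. -/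
theorem almost2SAT_iff_vertex_cover
    {X : Type*} (φ : List ((X × Bool) × (X × Bool)))
    (S : Finset (Fin φ.length)) (s : ℕ) :
    (∃ T : Finset (Fin φ.length), T ⊆ S ∧ T.card ≤ s ∧
      ∃ α : X → Bool, ∀ c : Fin φ.length, c ∉ T →
        (α (φ.get c).1.1 = (φ.get c).1.2 ∨ α (φ.get c).2.1 = (φ.get c).2.2)) ↔
    (∃ C : Finset (GIVert φ s),
      (∀ a b : GIVert φ s, (GI φ S s).Adj a b → a ∈ C ∨ b ∈ C) ∧
      C.card ≤ 2 * φ.length * (s + 1) + s) := by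
  simp only [← clauseSat_iff]
  constructor
  · rintro ⟨T, hTS, hTs, α, hα⟩
    obtain ⟨C, hC, hCcard⟩ := GI.exists_cover_of_clauseSat (s := s) hTS hα
    exact ⟨C, fun _ _ hab => hC hab, hCcard.trans (by omega)⟩
  · rintro ⟨C, hC, hCcard⟩
    exact GI.exists_clauseSat_of_cover (fun _ _ hab => hC _ _ hab) hCcard
end

section
/- Let φ be a 2CNF formula in which every clause consists of exactly two literals, let S be a subset of its clauses, let s be a natural number, and let G_I be the graph defined from (φ, S, s) as in the context. Then G_I has a perfect matching; in particular G_I has a matching of size N = Σ_x n_x·(s + 1) and exactly 2N vertices. -/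
namespace SimpleGraph.Subgraph

variable {V : Type*} {G : SimpleGraph V}

theorem IsPerfectMatching.two_mul_ncard_edgeSet [Fintype V] {M : G.Subgraph}
    (hM : M.IsPerfectMatching) : 2 * M.edgeSet.ncard = Fintype.card V := by
  classical
  have hdeg : ∀ v, M.spanningCoe.degree v = 1 := fun v => by
    rw [degree_spanningCoe]
    exact isPerfectMatching_iff_forall_degree.mp hM v
  have := M.spanningCoe.sum_degrees_eq_twice_card_edges
  simp only [hdeg, Finset.sum_const, Finset.card_univ, smul_eq_mul, mul_one] at this
  rw [this, ← edgeSet_spanningCoe, ← coe_edgeFinset, Set.ncard_coe_finset]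

def ofInvolutive (σ : V → V) (hσ : Function.Involutive σ) (hadj : ∀ v, G.Adj v (σ v)) :
    G.Subgraph where
  verts := Set.univ
  Adj v w := σ v = w
  adj_sub := by rintro v _ rfl; exact hadj v
  edge_vert _ := Set.mem_univ _
  symm := ⟨fun v _ h => h ▸ hσ v⟩

theorem isPerfectMatching_ofInvolutive (σ : V → V) (hσ : Function.Involutive σ)
    (hadj : ∀ v, G.Adj v (σ v)) : (ofInvolutive σ hσ hadj).IsPerfectMatching :=
  isPerfectMatching_iff.mpr fun _ => existsUnique_eq'

end SimpleGraph.Subgraph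

open SimpleGraph.Subgraph

theorem GI_adj_not_polarity {X : Type*} (φ : List ((X × Bool) × (X × Bool)))
    (S : Finset (Fin φ.length)) (s : ℕ) (a : GIVert φ s) : (GI φ S s).Adj a (!a.1, a.2) := by
  rw [GI, SimpleGraph.fromRel_adj]
  exact ⟨fun h => by simpa using congrArg Prod.fst h, Or.inl (Or.inl ⟨rfl, by simp⟩)⟩

/-- `G_I` has a perfect matching; in particular it has a matching of size
`N = Σ_x n_x · (s+1) = 2·|φ|·(s+1)` and exactly `2N` vertices. -/
theorem GI_has_perfect_matching
    {X : Type*} (φ : List ((X × Bool) × (X × Bool)))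
    (S : Finset (Fin φ.length)) (s : ℕ) :
    (∃ M : (GI φ S s).Subgraph, M.IsPerfectMatching) ∧
    (∃ M : (GI φ S s).Subgraph, M.IsMatching ∧
      M.edgeSet.ncard = 2 * φ.length * (s + 1)) ∧
    Fintype.card (GIVert φ s) = 2 * (2 * φ.length * (s + 1)) := by
  have hM := isPerfectMatching_ofInvolutive (fun a : GIVert φ s => (!a.1, a.2))
    (fun a => by simp) (GI_adj_not_polarity φ S s)
  have hcard : Fintype.card (GIVert φ s) = 2 * (2 * φ.length * (s + 1)) := by
    simp only [Fintype.card_prod, Fintype.card_bool, Fintype.card_fin]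
    ring
  have hedges := hM.two_mul_ncard_edgeSet
  exact ⟨⟨_, hM⟩, ⟨_, hM.1, by omega⟩, hcard⟩
end

section
/- Let x₁, …, x_k ∈ (Fin n → Bool) and let 1 ≤ i < j ≤ k. Define a new tuple y₁, …, y_k by y_i = x_i ⊓ x_j, y_j = x_i ⊔ x_j, and y_ℓ = x_ℓ for ℓ ∉ {i, j}, where ⊓ and ⊔ are pointwise Boolean AND and OR. Then Σ_{1 ≤ p < q ≤ k} hammingDist(x_p, x_q) = Σ_{1 ≤ p < q ≤ k} hammingDist(y_p, y_q). -/
/-!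
Coordinatewise, `(a ⊓ b, a ⊔ b)` is a permutation of `(a, b)` in the linear order `Bool`, so
uncrossing permutes each column of the `k × n` array of bits. The sum of Hamming distances over
all ordered pairs is a sum over columns of a quantity invariant under permuting the column, and
the sum over pairs `p < q` is half of it.
-/

open Finset

theorem hammingDist_eq_sum_ite {ι β : Type*} [Fintype ι] [DecidableEq β] (u v : ι → β) :
    hammingDist u v = ∑ t, if u t ≠ v t then 1 else 0 :=
  card_filter _ _

theorem sum_sum_hammingDist_eq_sum_sum_prod {ι τ β : Type*} [Fintype ι] [Fintype τ]
    [DecidableEq β] (x : ι → τ → β) :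
    ∑ p, ∑ q, hammingDist (x p) (x q) =
      ∑ t, ∑ pq : ι × ι, if x pq.1 t ≠ x pq.2 t then 1 else 0 := by
  simp only [hammingDist_eq_sum_ite]
  rw [← Fintype.sum_prod_type', sum_comm]

theorem sum_sum_hammingDist_eq_of_perm_columns {ι τ β : Type*} [Fintype ι] [Fintype τ]
    [DecidableEq β] {x y : ι → τ → β} (h : ∀ t, ∃ σ : Equiv.Perm ι, ∀ p, y p t = x (σ p) t) :
    ∑ p, ∑ q, hammingDist (y p) (y q) = ∑ p, ∑ q, hammingDist (x p) (x q) := by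
  rw [sum_sum_hammingDist_eq_sum_sum_prod, sum_sum_hammingDist_eq_sum_sum_prod]
  refine sum_congr rfl fun t _ => ?_
  obtain ⟨σ, hσ⟩ := h t
  simp only [hσ]
  exact Equiv.sum_comp (σ.prodCongr σ) (fun pq => if x pq.1 t ≠ x pq.2 t then 1 else 0)

theorem Finset.sum_sum_eq_two_nsmul_sum_sum_ite_lt {ι M : Type*} [Fintype ι] [LinearOrder ι]
    [AddCommMonoid M] (f : ι → ι → M) (hsymm : ∀ p q, f p q = f q p) (hdiag : ∀ p, f p p = 0) :
    ∑ p, ∑ q, f p q = 2 • ∑ p, ∑ q, if p < q then f p q else 0 := by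
  have hsplit : ∀ p q, f p q = (if p < q then f p q else 0) + (if q < p then f q p else 0) := by
    intro p q
    rcases lt_trichotomy p q with h | rfl | h
    · simp [h, h.not_gt]
    · simp [hdiag]
    · simp [h, h.not_gt, hsymm p q]
  calc ∑ p, ∑ q, f p q
      = ∑ p, ∑ q, ((if p < q then f p q else 0) + (if q < p then f q p else 0)) :=
        sum_congr rfl fun p _ => sum_congr rfl fun q _ => hsplit p q
    _ = 2 • ∑ p, ∑ q, if p < q then f p q else 0 := by
        simp only [sum_add_distrib]
        rw [two_nsmul, sum_comm (f := fun p q => if q < p then f q p else 0)]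

theorem exists_perm_apply_eq_of_inf_sup {ι α : Type*} [DecidableEq ι] [LinearOrder α]
    {c c' : ι → α} {i j : ι} (hi : c' i = c i ⊓ c j) (hj : c' j = c i ⊔ c j)
    (hl : ∀ l, l ≠ i → l ≠ j → c' l = c l) : ∃ σ : Equiv.Perm ι, ∀ p, c' p = c (σ p) := by
  rcases le_or_gt (c i) (c j) with h | h
  · refine ⟨1, fun p => ?_⟩
    by_cases hpi : p = i
    · subst hpi; simp [hi, h]
    by_cases hpj : p = j
    · subst hpj; simp [hj, h]
    · simp [hl p hpi hpj]
  · refine ⟨Equiv.swap i j, fun p => ?_⟩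
    by_cases hpi : p = i
    · subst hpi; simp [hi, h.le]
    by_cases hpj : p = j
    · subst hpj; simp [hj, h.le]
    · simp [hl p hpi hpj, Equiv.swap_apply_of_ne_of_ne hpi hpj]

theorem sum_pairwise_hammingDist_uncrossing_general
    (n k : ℕ) (x y : Fin k → Fin n → Bool) (i j : Fin k)
    (hyi : y i = x i ⊓ x j) (hyj : y j = x i ⊔ x j)
    (hyl : ∀ l : Fin k, l ≠ i → l ≠ j → y l = x l) :
    (∑ p : Fin k, ∑ q : Fin k, if p < q then hammingDist (x p) (x q) else 0) =
    (∑ p : Fin k, ∑ q : Fin k, if p < q then hammingDist (y p) (y q) else 0) := by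
  have hcolumns : ∀ t, ∃ σ : Equiv.Perm (Fin k), ∀ p, y p t = x (σ p) t := fun t =>
    exists_perm_apply_eq_of_inf_sup (c := fun p => x p t) (congrFun hyi t) (congrFun hyj t)
      fun l hli hlj => congrFun (hyl l hli hlj) t
  have hdouble (z : Fin k → Fin n → Bool) :=
    sum_sum_eq_two_nsmul_sum_sum_ite_lt (fun p q => hammingDist (z p) (z q))
      (fun _ _ => hammingDist_comm _ _) (fun _ => hammingDist_self _)
  have hfull := sum_sum_hammingDist_eq_of_perm_columns hcolumns
  rw [hdouble x, hdouble y] at hfull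
  exact (Nat.eq_of_mul_eq_mul_left two_pos hfull).symm

/-- Uncrossing invariance: replacing a pair `x_i, x_j` (with `i < j`) by their
pointwise meet `x_i ⊓ x_j` and join `x_i ⊔ x_j` leaves the sum of pairwise
Hamming distances unchanged. -/
theorem sum_pairwise_hammingDist_uncrossing
    (n k : ℕ) (x y : Fin k → Fin n → Bool) (i j : Fin k) (hij : i < j)
    (hyi : y i = x i ⊓ x j) (hyj : y j = x i ⊔ x j)
    (hyl : ∀ l : Fin k, l ≠ i → l ≠ j → y l = x l) :
    (∑ p : Fin k, ∑ q : Fin k, if p < q then hammingDist (x p) (x q) else 0) =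
    (∑ p : Fin k, ∑ q : Fin k, if p < q then hammingDist (y p) (y q) else 0) :=
  sum_pairwise_hammingDist_uncrossing_general n k x y i j hyi hyj hyl
end

section
/- Let S be a nonempty subset of (Fin n → Bool) that is closed under pointwise Boolean AND and pointwise Boolean OR, and let k be a positive integer. Then there exists a tuple (x₁, …, x_k) ∈ S^k with x₁ ≤ x₂ ≤ ⋯ ≤ x_k in the pointwise order that maximizes Σ_{1 ≤ i < j ≤ k} hammingDist(x_i, x_j) over all tuples in S^k; i.e., for every tuple (z₁, …, z_k) ∈ S^k, Σ_{i<j} hammingDist(z_i, z_j) ≤ Σ_{i<j} hammingDist(x_i, x_j). -/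
/-!
The sum of pairwise Hamming distances of a `k`-tuple splits over coordinates: a coordinate in
which `c` of the `k` vectors are `true` contributes `c * (k - c)`. So the sum depends only on these
column counts. For any tuple `z` in `S`, its lattice order statistics
`x j = ⨆_{|T| = k - j} ⨅_{p ∈ T} z p` lie in `S`, form a chain, and in every coordinate have as
many `true` entries as `z`. Sorting a maximizing tuple in this way gives a maximizing chain.
-/

open Finset

theorem Finset.two_nsmul_sum_sum_ite_lt {ι M : Type*} [Fintype ι] [LinearOrder ι]
    [AddCommMonoid M] (f : ι → ι → M) (hf : ∀ p q, f p q = f q p) (hf₀ : ∀ p, f p p = 0) :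
    2 • ∑ p, ∑ q, (if p < q then f p q else 0) = ∑ p, ∑ q, f p q := by
  have hswap : ∑ p, ∑ q, (if p < q then f p q else 0) = ∑ p, ∑ q, if q < p then f p q else 0 := by
    rw [sum_comm]
    simp_rw [hf]
  rw [two_nsmul]
  nth_rw 2 [hswap]
  simp_rw [← sum_add_distrib]
  refine sum_congr rfl fun p _ => sum_congr rfl fun q _ => ?_
  rcases lt_trichotomy p q with h | rfl | h
  · simp [h, h.not_gt]
  · simp [hf₀]
  · simp [h, h.not_gt]

theorem Bool.sum_sum_boole_ne {ι : Type*} [Fintype ι] (b : ι → Bool) :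
    ∑ p, ∑ q, (if b p ≠ b q then 1 else 0) =
      2 * (#{p | b p = true} * (Fintype.card ι - #{p | b p = true})) := by
  have hcompl : #{p | b p = false} = Fintype.card ι - #{p | b p = true} := by
    rw [← card_univ, ← card_filter_add_card_filter_not (s := univ) (fun p => b p = true)]
    simp
  have hrow : ∀ p, #{q | b p ≠ b q} = if b p then #{q | b q = false} else #{q | b q = true} := by
    intro p
    split_ifs with hp <;> simp [hp]
  simp only [sum_boole, Nat.cast_id, hrow, sum_ite, sum_const, smul_eq_mul, Bool.not_eq_true,
    ← hcompl]
  ring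

theorem sum_sum_ite_lt_hammingDist {ι β : Type*} [Fintype ι] [LinearOrder ι] [Fintype β]
    (w : ι → β → Bool) :
    ∑ p, ∑ q, (if p < q then hammingDist (w p) (w q) else 0) =
      ∑ i, #{p | w p i = true} * (Fintype.card ι - #{p | w p i = true}) := by
  apply Nat.eq_of_mul_eq_mul_left two_pos
  rw [← smul_eq_mul, two_nsmul_sum_sum_ite_lt (fun p q => hammingDist (w p) (w q))
    (fun _ _ => hammingDist_comm _ _) (fun _ => hammingDist_self _), mul_sum]
  calc ∑ p, ∑ q, hammingDist (w p) (w q)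
      = ∑ p, ∑ q, ∑ i, if w p i ≠ w q i then 1 else 0 := by simp only [hammingDist, card_filter]
    _ = ∑ i, ∑ p, ∑ q, if w p i ≠ w q i then 1 else 0 :=
        (sum_congr rfl fun _ _ => sum_comm).trans sum_comm
    _ = _ := by simp only [Bool.sum_sum_boole_ne]

theorem Fin.card_filter_sub_val_le {k c : ℕ} (hc : c ≤ k) :
    #{j : Fin k | k - (j : ℕ) ≤ c} = c := by
  have hlt := Fin.card_filter_val_lt (n := k) (m := k - c)
  have hsplit := card_filter_add_card_filter_not (s := univ) fun j : Fin k => (j : ℕ) < k - c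
  have hflip : #{j : Fin k | k - (j : ℕ) ≤ c} = #{j : Fin k | ¬ (j : ℕ) < k - c} :=
    congrArg card (filter_congr fun j _ => by omega)
  simp only [card_univ, Fintype.card_fin] at hsplit
  omega

section nthLargest

variable {ι α : Type*} [Fintype ι]

/-- In a linear order this is the `m`-th largest entry of `z` (see `le_nthLargest_iff`). -/
def nthLargest [Lattice α] [BoundedOrder α] (z : ι → α) (m : ℕ) : α :=
  (powersetCard m univ).sup fun T => T.inf z

theorem nthLargest_mem [Lattice α] [BoundedOrder α] {S : Set α} (hsup : SupClosed S)
    (hinf : InfClosed S) {z : ι → α} (hz : ∀ p, z p ∈ S) {m : ℕ} (hm : 0 < m)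
    (hmι : m ≤ Fintype.card ι) : nthLargest z m ∈ S :=
  hsup.finsetSup_mem (powersetCard_nonempty.2 hmι) fun _ hT =>
    hinf.finsetInf_mem (card_pos.1 ((mem_powersetCard.1 hT).2 ▸ hm)) fun p _ => hz p

theorem nthLargest_antitone [Lattice α] [BoundedOrder α] (z : ι → α) :
    Antitone (nthLargest z) := by
  intro m m' hmm'
  refine Finset.sup_le fun T hT => ?_
  rw [mem_powersetCard] at hT
  obtain ⟨T', hT'T, hT'⟩ := exists_subset_card_eq (hmm'.trans_eq hT.2.symm)
  exact le_sup_of_le (mem_powersetCard.2 ⟨subset_univ _, hT'⟩) (inf_mono hT'T)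

theorem nthLargest_apply {β : Type*} [Lattice α] [BoundedOrder α] (z : ι → β → α) (m : ℕ)
    (i : β) : nthLargest z m i = nthLargest (fun p => z p i) m := by
  simp [nthLargest]

theorem le_nthLargest_iff [LinearOrder α] [BoundedOrder α] [DecidableLE α] {a : α} (ha : ⊥ < a)
    (z : ι → α) (m : ℕ) : a ≤ nthLargest z m ↔ m ≤ #{p | a ≤ z p} := by
  simp only [nthLargest, Finset.le_sup_iff ha, Finset.le_inf_iff, mem_powersetCard]
  constructor
  · rintro ⟨T, ⟨-, rfl⟩, hTa⟩
    exact card_le_card fun p hp => mem_filter.2 ⟨mem_univ p, hTa p hp⟩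
  · intro h
    obtain ⟨T, hT, rfl⟩ := exists_subset_card_eq h
    exact ⟨T, ⟨subset_univ T, rfl⟩, fun p hp => (mem_filter.1 (hT hp)).2⟩

theorem Bool.nthLargest_eq_true_iff (b : ι → Bool) (m : ℕ) :
    nthLargest b m = true ↔ m ≤ #{p | b p = true} := by
  simpa [← top_eq_true] using le_nthLargest_iff (a := true) bot_lt_top b m

end nthLargest

theorem Bool.card_nthLargest_sub_eq_true {k : ℕ} (b : Fin k → Bool) :
    #{j : Fin k | nthLargest b (k - (j : ℕ)) = true} = #{p | b p = true} := by
  simp only [Bool.nthLargest_eq_true_iff]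
  exact Fin.card_filter_sub_val_le (card_le_univ _ |>.trans_eq (Fintype.card_fin k))

theorem exists_chain_maximizing_sum_pairwise_hammingDist_general
    (n k : ℕ) (S : Set (Fin n → Bool)) (hne : S.Nonempty)
    (hand : ∀ u ∈ S, ∀ v ∈ S, u ⊓ v ∈ S)
    (hor : ∀ u ∈ S, ∀ v ∈ S, u ⊔ v ∈ S) :
    ∃ x : Fin k → Fin n → Bool,
      (∀ i : Fin k, x i ∈ S) ∧
      (∀ i j : Fin k, i ≤ j → x i ≤ x j) ∧
      (∀ z : Fin k → Fin n → Bool, (∀ i : Fin k, z i ∈ S) →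
        (∑ p : Fin k, ∑ q : Fin k, if p < q then hammingDist (z p) (z q) else 0) ≤
        (∑ p : Fin k, ∑ q : Fin k, if p < q then hammingDist (x p) (x q) else 0)) := by
  obtain ⟨z₀, hz₀S, hz₀max⟩ := Set.exists_max_image {z : Fin k → Fin n → Bool | ∀ p, z p ∈ S}
    (fun z => ∑ p, ∑ q, if p < q then hammingDist (z p) (z q) else 0) (Set.toFinite _)
    ⟨fun _ => hne.some, fun _ => hne.some_mem⟩
  refine ⟨fun j => nthLargest z₀ (k - (j : ℕ)), fun j => ?_, fun i j hij => ?_,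
    fun z hz => (hz₀max z hz).trans_eq ?_⟩
  · exact nthLargest_mem (fun u hu v hv => hor u hu v hv) (fun u hu v hv => hand u hu v hv) hz₀S
      (by omega) (by simp)
  · exact nthLargest_antitone z₀ (by omega)
  · simp only [sum_sum_ite_lt_hammingDist, nthLargest_apply, Bool.card_nthLargest_sub_eq_true]

/-- Lemma 6: over a nonempty set `S ⊆ (Fin n → Bool)` closed under pointwise
AND and OR, the sum of pairwise Hamming distances of a `k`-tuple is maximized
by a totally ordered tuple (a chain). -/
theorem exists_chain_maximizing_sum_pairwise_hammingDist
    (n k : ℕ) (hk : 1 ≤ k) (S : Set (Fin n → Bool)) (hne : S.Nonempty)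
    (hand : ∀ u ∈ S, ∀ v ∈ S, u ⊓ v ∈ S)
    (hor : ∀ u ∈ S, ∀ v ∈ S, u ⊔ v ∈ S) :
    ∃ x : Fin k → Fin n → Bool,
      (∀ i : Fin k, x i ∈ S) ∧
      (∀ i j : Fin k, i ≤ j → x i ≤ x j) ∧
      (∀ z : Fin k → Fin n → Bool, (∀ i : Fin k, z i ∈ S) →
        (∑ p : Fin k, ∑ q : Fin k, if p < q then hammingDist (z p) (z q) else 0) ≤
        (∑ p : Fin k, ∑ q : Fin k, if p < q then hammingDist (x p) (x q) else 0)) :=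
  exists_chain_maximizing_sum_pairwise_hammingDist_general n k S hne hand hor
end
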